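/- For x > 0 with x ≠ 1 and 0 < Re(ω) < 3, the integral φ(ω;x) := ∫_0^∞ s^{ω-1}/((s+1)(s+x)²) ds equals π(1 + x^{ω-2}((ω-2)x + 1-ω))/((x-1)² sin(πω)); for x = 1 it equals π(ω-1)(ω-2)/(2 sin(πω)). -/

import Mathlib

/-!
Taylor's formula with integral remainder for `t ↦ 1 / (s + t)` between `x` and `1` gives
`(x - 1) ^ 2 / ((s + 1) (s + x) ^ 2) = ∫_x^1 2 (1 - t) / (s + t) ^ 3 dt`.
Exchanging the two integrals reduces `φ(ω; x)` to the Beta integral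
`∫_0^∞ s ^ (ω - 1) / (s + t) ^ 3 ds = t ^ (ω - 3) B(ω, 3 - ω)` (substitute `u = s / (s + t)`),
and the remaining integral `∫_x^1 (1 - t) t ^ (ω - 3) dt` is elementary.
Finally `B(ω, 3 - ω) = Γ(ω) Γ(3 - ω) / 2 = π (1 - ω) (2 - ω) / (2 sin (π ω))` by the
reflection formula. For `x = 1` the integrand is already `s ^ (ω - 1) / (s + 1) ^ 3`.
-/

open MeasureTheory Set

section BetaIoi

variable {t : ℝ}

lemma image_div_add_Ioi (ht : 0 < t) : (fun s : ℝ => s / (s + t)) '' Ioi 0 = Ioo 0 1 := by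
  ext u
  constructor
  · rintro ⟨s, hs, rfl⟩
    have hs : 0 < s := hs
    exact ⟨by positivity, (div_lt_one (by positivity)).2 (by linarith)⟩
  · rintro ⟨hu0, hu1⟩
    refine ⟨t * u / (1 - u), div_pos (mul_pos ht hu0) (sub_pos.2 hu1), ?_⟩
    have : 1 - u ≠ 0 := (sub_pos.2 hu1).ne'
    field_simp
    ring

lemma hasDerivWithinAt_div_add (ht : 0 < t) : ∀ s ∈ Ioi (0 : ℝ),
    HasDerivWithinAt (fun s : ℝ => s / (s + t)) (t / (s + t) ^ 2) (Ioi 0) s := by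
  intro s (hs : 0 < s)
  refine (((hasDerivAt_id' s).fun_div ((hasDerivAt_id' s).add_const t)
    (by positivity)).congr_deriv ?_).hasDerivWithinAt
  ring

lemma injOn_div_add (ht : 0 < t) : InjOn (fun s : ℝ => s / (s + t)) (Ioi 0) := by
  intro s₁ (hs₁ : 0 < s₁) s₂ (hs₂ : 0 < s₂) h
  rw [div_eq_div_iff (by positivity) (by positivity)] at h
  nlinarith

lemma abs_deriv_smul_betaIntegrand_div_add (a b : ℂ) (ht : 0 < t) {s : ℝ} (hs : 0 < s) :
    |t / (s + t) ^ 2| •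
        (((s / (s + t) : ℝ) : ℂ) ^ (a - 1) * (1 - ((s / (s + t) : ℝ) : ℂ)) ^ (b - 1))
      = (t : ℂ) ^ b * ((s : ℂ) ^ (a - 1) / ((s : ℂ) + t) ^ (a + b)) := by
  have hst : 0 < s + t := by positivity
  have hT : (t : ℂ) ≠ 0 := by exact_mod_cast ht.ne'
  have hU : ((s + t : ℝ) : ℂ) ≠ 0 := by exact_mod_cast hst.ne'
  have hsub : 1 - ((s / (s + t) : ℝ) : ℂ) = (t : ℂ) / ((s + t : ℝ) : ℂ) := by
    push_cast at hU ⊢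
    field_simp
    ring
  have htb : (t : ℂ) ^ b = (t : ℂ) ^ (b - 1) * t := by
    rw [Complex.cpow_sub _ _ hT, Complex.cpow_one, div_mul_cancel₀ _ hT]
  have hUab : ((s + t : ℝ) : ℂ) ^ (a + b)
      = ((s + t : ℝ) : ℂ) ^ (a - 1) * ((s + t : ℝ) : ℂ) ^ (b - 1) * ((s + t : ℝ) : ℂ) ^ 2 := by
    rw [← Complex.cpow_add _ _ hU, ← Complex.cpow_natCast, ← Complex.cpow_add _ _ hU]
    ring_nf
  rw [hsub, Complex.ofReal_div, Complex.div_cpow_ofReal_nonneg hs.le hst.le,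
    Complex.div_cpow_ofReal_nonneg ht.le hst.le, abs_of_pos (by positivity), Complex.real_smul,
    show (s : ℂ) + t = ((s + t : ℝ) : ℂ) by push_cast; ring, hUab, htb]
  push_cast
  field_simp

lemma integrableOn_Ioi_cpow_div_add_cpow {a b : ℂ} (ha : 0 < a.re) (hb : 0 < b.re)
    (ht : 0 < t) :
    IntegrableOn (fun s : ℝ => (s : ℂ) ^ (a - 1) / ((s : ℂ) + t) ^ (a + b)) (Ioi 0) := by
  have hbeta := Complex.betaIntegral_convergent ha hb
  rw [intervalIntegrable_iff_integrableOn_Ioo_of_le zero_le_one, ← image_div_add_Ioi ht,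
    integrableOn_image_iff_integrableOn_abs_deriv_smul measurableSet_Ioi
      (hasDerivWithinAt_div_add ht) (injOn_div_add ht)] at hbeta
  have hT : (t : ℂ) ^ b ≠ 0 := by simp [Complex.cpow_eq_zero_iff, ht.ne']
  rw [IntegrableOn, ← integrable_const_mul_iff (isUnit_iff_ne_zero.2 hT)]
  exact hbeta.congr_fun (fun s hs => abs_deriv_smul_betaIntegrand_div_add a b ht hs)
    measurableSet_Ioi

lemma integral_Ioi_cpow_div_add_cpow (a b : ℂ) (ht : 0 < t) :
    ∫ s in Ioi (0 : ℝ), (s : ℂ) ^ (a - 1) / ((s : ℂ) + t) ^ (a + b)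
      = (t : ℂ) ^ (-b) * Complex.betaIntegral a b := by
  have hT : (t : ℂ) ≠ 0 := by exact_mod_cast ht.ne'
  rw [Complex.betaIntegral, intervalIntegral.integral_of_le zero_le_one,
    integral_Ioc_eq_integral_Ioo, ← image_div_add_Ioi ht,
    integral_image_eq_integral_abs_deriv_smul measurableSet_Ioi (hasDerivWithinAt_div_add ht)
      (injOn_div_add ht),
    setIntegral_congr_fun measurableSet_Ioi
      (fun s hs => abs_deriv_smul_betaIntegrand_div_add a b ht hs),
    integral_const_mul, ← mul_assoc, ← Complex.cpow_add _ _ hT, neg_add_cancel,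
    Complex.cpow_zero, one_mul]

end BetaIoi

namespace Complex

lemma Gamma_mul_Gamma_three_sub {s : ℂ} (hs : sin (Real.pi * s) ≠ 0) :
    Gamma s * Gamma (3 - s) = Real.pi * (1 - s) * (2 - s) / sin (Real.pi * s) := by
  have h1 : 1 - s ≠ 0 := by
    rintro h
    rw [← sub_eq_zero.1 h, mul_one] at hs
    exact hs (by exact_mod_cast sin_pi)
  have h2 : 2 - s ≠ 0 := by
    rintro h
    rw [← sub_eq_zero.1 h, mul_comm] at hs
    exact hs (by exact_mod_cast sin_nat_mul_pi 2)
  rw [show (3 : ℂ) - s = (1 - s) + 1 + 1 by ring, Gamma_add_one _ (by convert h2 using 1; ring),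
    Gamma_add_one _ h1, mul_left_comm, mul_left_comm _ (1 - s), Gamma_mul_Gamma_one_sub]
  ring

lemma betaIntegral_three_sub {ω : ℂ} (h0 : 0 < ω.re) (h3 : ω.re < 3)
    (hsin : sin (Real.pi * ω) ≠ 0) :
    betaIntegral ω (3 - ω) = Real.pi * (1 - ω) * (2 - ω) / (2 * sin (Real.pi * ω)) := by
  have h := Gamma_mul_Gamma_eq_betaIntegral h0 (by simpa using h3 : 0 < (3 - ω).re)
  rw [add_sub_cancel, Gamma_ofNat_eq_factorial, Gamma_mul_Gamma_three_sub hsin,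
    Nat.factorial_two, Nat.cast_two] at h
  rw [mul_comm 2, ← div_div, h, mul_div_cancel_left₀ _ two_ne_zero]

end Complex

lemma integral_two_mul_sub_div_add_pow_three {s x y : ℝ} (hx : 0 < s + x) (hy : 0 < s + y) :
    ∫ t in x..y, 2 * (y - t) / (s + t) ^ 3 = (y - x) ^ 2 / ((s + y) * (s + x) ^ 2) := by
  have hpos : ∀ t ∈ uIcc x y, 0 < s + t := fun t ht => by
    rcases min_le_iff.1 ht.1 with h | h <;> linarith
  have hderiv : ∀ t ∈ uIcc x y,
      HasDerivAt (fun t => (s + 2 * t - y) / (s + t) ^ 2) (2 * (y - t) / (s + t) ^ 3) t := by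
    intro t ht
    have hst := hpos t ht
    have hnum : HasDerivAt (fun t => s + 2 * t - y) 2 t := by
      simpa using (((hasDerivAt_id' t).const_mul 2).const_add s).sub_const y
    have hden : HasDerivAt (fun t => (s + t) ^ 2) (2 * (s + t)) t := by
      simpa using ((hasDerivAt_id' t).const_add s).fun_pow 2
    refine (hnum.div hden (by positivity)).congr_deriv ?_
    field_simp
    ring
  rw [intervalIntegral.integral_eq_sub_of_hasDerivAt hderiv]
  · field_simp
    ring
  · refine ContinuousOn.intervalIntegrable fun t ht => ?_
    have hst := hpos t ht
    exact (ContinuousAt.div (by fun_prop) (by fun_prop) (by positivity)).continuousWithinAt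

section Kernel

variable {ω : ℂ}

lemma integral_Ioi_cpow_div_add_pow_three {t : ℝ} (ht : 0 < t) :
    ∫ s in Ioi (0 : ℝ), (s : ℂ) ^ (ω - 1) / ((s : ℂ) + t) ^ 3
      = (t : ℂ) ^ (ω - 3) * Complex.betaIntegral ω (3 - ω) := by
  have h := integral_Ioi_cpow_div_add_cpow ω (3 - ω) ht
  rw [add_sub_cancel, neg_sub] at h
  simpa only [Complex.cpow_ofNat] using h

lemma integrableOn_Ioi_cpow_div_add_pow_three (h0 : 0 < ω.re) (h3 : ω.re < 3) {t : ℝ}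
    (ht : 0 < t) :
    IntegrableOn (fun s : ℝ => (s : ℂ) ^ (ω - 1) / ((s : ℂ) + t) ^ 3) (Ioi 0) := by
  have h := integrableOn_Ioi_cpow_div_add_cpow h0 (by simpa using h3 : 0 < (3 - ω).re) ht
  simpa only [add_sub_cancel, Complex.cpow_ofNat] using h

lemma integral_mul_one_sub_mul_cpow {x : ℝ} (hx : 0 < x) :
    ∫ t in x..1, (ω - 1) * (ω - 2) * (1 - t) * (t : ℂ) ^ (ω - 3)
      = 1 - (x : ℂ) ^ (ω - 2) * ((ω - 1) - (ω - 2) * x) := by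
  have hpos : ∀ t ∈ uIcc x 1, 0 < t := fun t ht => by
    rcases min_le_iff.1 ht.1 with h | h <;> linarith
  have hderiv : ∀ t ∈ uIcc x 1,
      HasDerivAt (fun t : ℝ => (t : ℂ) ^ (ω - 2) * ((ω - 1) - (ω - 2) * t))
        ((ω - 1) * (ω - 2) * (1 - t) * (t : ℂ) ^ (ω - 3)) t := by
    intro t ht
    have ht0 : (t : ℂ) ≠ 0 := by exact_mod_cast (hpos t ht).ne'
    have hpow : HasDerivAt (fun t : ℝ => (t : ℂ) ^ (ω - 2)) ((ω - 2) * (t : ℂ) ^ (ω - 3)) t := by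
      have := (Complex.hasStrictDerivAt_cpow_const (c := ω - 2)
        (Complex.ofReal_mem_slitPlane.2 (hpos t ht))).hasDerivAt.comp_ofReal
      rwa [show ω - 2 - 1 = ω - 3 by ring] at this
    have hlin : HasDerivAt (fun t : ℝ => (ω - 1) - (ω - 2) * (t : ℂ)) (-((ω - 2) * 1)) t :=
      (((hasDerivAt_id' t).ofReal_comp).const_mul (ω - 2)).const_sub (ω - 1)
    refine (hpow.mul hlin).congr_deriv ?_
    rw [show ω - 2 = ω - 3 + 1 by ring, Complex.cpow_add _ _ ht0, Complex.cpow_one]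
    ring
  rw [intervalIntegral.integral_eq_sub_of_hasDerivAt hderiv]
  · norm_num
  · refine ContinuousOn.intervalIntegrable fun t ht => ?_
    exact (ContinuousAt.mul (by fun_prop) (Complex.continuousAt_ofReal_cpow_const _ _
      (Or.inr (hpos t ht).ne'))).continuousWithinAt

noncomputable def phiKernel (ω : ℂ) (t s : ℝ) : ℂ := (s : ℂ) ^ (ω - 1) * (2 * (1 - t) / ((s : ℂ) + t) ^ 3)

lemma intervalIntegral_phiKernel {x s : ℝ} (hx : 0 < x) (hs : 0 < s) :
    ∫ t in x..1, phiKernel ω t s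
      = ((x : ℂ) - 1) ^ 2 * ((s : ℂ) ^ (ω - 1) / (((s : ℂ) + 1) * ((s : ℂ) + x) ^ 2)) := by
  have h1 : (s : ℂ) + 1 ≠ 0 := by exact_mod_cast (by linarith : s + 1 ≠ 0)
  have h2 : (s : ℂ) + x ≠ 0 := by exact_mod_cast (by linarith : s + x ≠ 0)
  have hreal : ∫ t in x..1, (2 * (1 - (t : ℂ)) / ((s : ℂ) + t) ^ 3)
      = (((1 - x) ^ 2 / ((s + 1) * (s + x) ^ 2) : ℝ) : ℂ) := by
    rw [← integral_two_mul_sub_div_add_pow_three (by linarith) (by linarith),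
      ← intervalIntegral.integral_ofReal]
    push_cast
    rfl
  simp only [phiKernel]
  rw [intervalIntegral.integral_const_mul, hreal]
  push_cast
  field_simp
  ring

lemma integral_Ioi_phiKernel {t : ℝ} (ht : 0 < t) :
    ∫ s in Ioi (0 : ℝ), phiKernel ω t s
      = 2 * (1 - t) * (t : ℂ) ^ (ω - 3) * Complex.betaIntegral ω (3 - ω) := by
  simp_rw [phiKernel, mul_div_left_comm _ (2 * (1 - (t : ℂ)))]
  rw [integral_const_mul, integral_Ioi_cpow_div_add_pow_three ht]
  ring

lemma integrable_phiKernel (h0 : 0 < ω.re) (h3 : ω.re < 3) {x : ℝ} (hx : 0 < x) :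
    Integrable (Function.uncurry (phiKernel ω))
      ((volume.restrict (uIoc x 1)).prod (volume.restrict (Ioi 0))) := by
  set m := min x 1
  have hm : 0 < m := lt_min hx one_pos
  have hdom := ((Continuous.integrableOn_uIoc (μ := volume) (a := x) (b := 1)
    (f := fun t : ℝ => 2 * (1 - (t : ℂ))) (by fun_prop)).norm).mul_prod
    (integrableOn_Ioi_cpow_div_add_pow_three h0 h3 hm).norm
  refine hdom.mono' (Measurable.aestronglyMeasurable (by unfold phiKernel; fun_prop)) ?_
  rw [Measure.prod_restrict]
  filter_upwards [ae_restrict_mem (measurableSet_uIoc.prod measurableSet_Ioi)]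
  rintro ⟨t, s⟩ ⟨⟨hmt, -⟩, hs : 0 < s⟩
  have hnorm : ∀ r : ℝ, 0 < r → ‖(s : ℂ) + r‖ = s + r := fun r hr => by
    rw [← Complex.ofReal_add, Complex.norm_real, Real.norm_of_nonneg (by positivity)]
  simp only [Function.uncurry_apply_pair, phiKernel, norm_mul, norm_div, norm_pow,
    hnorm t (hm.trans hmt), hnorm m hm, mul_div_left_comm ‖(s : ℂ) ^ (ω - 1)‖]
  gcongr

end Kernel

theorem phi_integral_closed_form (x : ℝ) (hx : 0 < x) (ω : ℂ)
    (h0 : 0 < ω.re) (h3 : ω.re < 3) (hsin : Complex.sin ((Real.pi : ℂ) * ω) ≠ 0) :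
    (x ≠ 1 →
      (∫ s in Set.Ioi (0 : ℝ), (s : ℂ) ^ (ω - 1) / (((s : ℂ) + 1) * ((s : ℂ) + (x : ℂ)) ^ 2)) =
        (Real.pi : ℂ) * (1 + (x : ℂ) ^ (ω - 2) * ((ω - 2) * (x : ℂ) + 1 - ω)) /
          (((x : ℂ) - 1) ^ 2 * Complex.sin ((Real.pi : ℂ) * ω))) ∧
    (x = 1 →
      (∫ s in Set.Ioi (0 : ℝ), (s : ℂ) ^ (ω - 1) / (((s : ℂ) + 1) * ((s : ℂ) + (x : ℂ)) ^ 2)) =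
        (Real.pi : ℂ) * (ω - 1) * (ω - 2) / (2 * Complex.sin ((Real.pi : ℂ) * ω))) := by
  have hB := Complex.betaIntegral_three_sub h0 h3 hsin
  constructor
  · intro hx1
    have hx1sq : ((x : ℂ) - 1) ^ 2 ≠ 0 := pow_ne_zero 2 (by exact_mod_cast sub_ne_zero.2 hx1)
    calc _ = ∫ s in Ioi (0 : ℝ), (((x : ℂ) - 1) ^ 2)⁻¹ * ∫ t in x..1, phiKernel ω t s :=
          setIntegral_congr_fun measurableSet_Ioi fun s hs => by
            rw [intervalIntegral_phiKernel hx hs, inv_mul_cancel_left₀ hx1sq]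
      _ = (((x : ℂ) - 1) ^ 2)⁻¹ * ∫ t in x..1, ∫ s in Ioi (0 : ℝ), phiKernel ω t s := by
        rw [integral_const_mul, intervalIntegral_integral_swap (integrable_phiKernel h0 h3 hx)]
      _ = (((x : ℂ) - 1) ^ 2)⁻¹ * ∫ t in x..1, Real.pi / Complex.sin (Real.pi * ω) *
          ((ω - 1) * (ω - 2) * (1 - t) * (t : ℂ) ^ (ω - 3)) := by
        refine congrArg _ (intervalIntegral.integral_congr fun t ht => ?_)
        have ht0 : 0 < t := by rcases min_le_iff.1 ht.1 with h | h <;> linarith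
        rw [integral_Ioi_phiKernel ht0, hB]
        field_simp
        ring
      _ = _ := by
        rw [intervalIntegral.integral_const_mul, integral_mul_one_sub_mul_cpow hx]
        field_simp
        ring
  · rintro rfl
    calc _ = ∫ s in Ioi (0 : ℝ), (s : ℂ) ^ (ω - 1) / ((s : ℂ) + (1 : ℝ)) ^ 3 :=
          setIntegral_congr_fun measurableSet_Ioi fun s _ => by push_cast; ring
      _ = _ := by
        rw [integral_Ioi_cpow_div_add_pow_three one_pos, Complex.ofReal_one, Complex.one_cpow,
          one_mul, hB]
        ring
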